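/- arXiv:2509.13254 — 2 statements merged into one kernel-verified Lean document; each statement's English description precedes it below -/
import Mathlib

section
/- Let f: ℂ → ℂ be holomorphic on a disc of radius 2r around s₀ with |f(s₀)| ≤ δ and |f'(s)| ≥ m > 0 and |f''(s)| ≤ M on that disc. If δ ≤ m²/(4M) and δ/m ≤ r, then f has a zero s* with |s* - s₀| ≤ 2δ/m. -/
/-!
The simplified Newton map `T s = s - f s / f' s₀` has derivative `(f' s₀ - f' s) / f' s₀`, which
the bound on `f''` keeps below `3/8` near `s₀`. So `T` contracts a small closed ball into itself,
and its fixed point is a zero of `f`. A ball centred at `s₀` would need radius `2δ/m`, which may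
reach the boundary of the disc; centred at the Newton iterate `T s₀`, where `f` is quadratically
small, radius `δ/(2m)` suffices.
-/

open Metric Set
open scoped NNReal

theorem exists_zero_mem_closedBall_of_norm_deriv_sub_le {𝕜 : Type*} [RCLike 𝕜] {f : 𝕜 → 𝕜}
    {c A : 𝕜} {ρ : ℝ} {q : ℝ≥0} (hA : A ≠ 0) (hq : q < 1)
    (hf : ∀ x ∈ closedBall c ρ, DifferentiableAt 𝕜 f x)
    (hf' : ∀ x ∈ closedBall c ρ, ‖deriv f x - A‖ ≤ q * ‖A‖)
    (hc : ‖f c‖ ≤ (1 - q) * ρ * ‖A‖) :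
    ∃ z ∈ closedBall c ρ, f z = 0 := by
  set T : 𝕜 → 𝕜 := fun x => x - f x / A
  have hA₀ : 0 < ‖A‖ := norm_pos_iff.2 hA
  have hq₁ : (0 : ℝ) < 1 - q := sub_pos.2 (by exact_mod_cast hq)
  have hTc : ‖T c - c‖ ≤ (1 - q) * ρ := by
    rw [sub_sub_cancel_left, norm_neg, norm_div, div_le_iff₀ hA₀]
    exact hc
  have hc : c ∈ closedBall c ρ := mem_closedBall_self <|
    nonneg_of_mul_nonneg_right ((norm_nonneg _).trans hTc) hq₁
  have hT : ∀ x ∈ closedBall c ρ, HasDerivAt T (1 - deriv f x / A) x := fun x hx =>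
    (hasDerivAt_id x).sub ((hf x hx).hasDerivAt.div_const A)
  have hlip : LipschitzOnWith q T (closedBall c ρ) :=
    (convex_closedBall c ρ).lipschitzOnWith_of_nnnorm_hasDerivWithin_le
      (fun x hx => (hT x hx).hasDerivWithinAt) fun x hx => by
        rw [← NNReal.coe_le_coe, coe_nnnorm, one_sub_div hA, norm_div, norm_sub_rev,
          div_le_iff₀ hA₀]
        exact hf' x hx
  have hmaps : MapsTo T (closedBall c ρ) (closedBall c ρ) := by
    intro x hx
    rw [mem_closedBall_iff_norm]
    calc ‖T x - c‖ ≤ ‖T x - T c‖ + ‖T c - c‖ := norm_sub_le_norm_sub_add_norm_sub _ _ _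
      _ ≤ q * ρ + (1 - q) * ρ := by
        gcongr
        exact (hlip.norm_sub_le hx hc).trans (by gcongr; exact mem_closedBall_iff_norm.1 hx)
      _ = ρ := by ring
  obtain ⟨z, hz, hTz, -⟩ := ContractingWith.exists_fixedPoint' isClosed_closedBall.isComplete
    hmaps ⟨hq, hlip.mapsToRestrict hmaps⟩ hc (edist_ne_top _ _)
  exact ⟨z, hz, by simpa [T, Function.IsFixedPt, hA] using hTz⟩

section Holomorphic

variable {f : ℂ → ℂ} {U : Set ℂ} {M : ℝ} {x y : ℂ}

theorem norm_deriv_sub_deriv_le (hU : IsOpen U) (hUc : Convex ℝ U) (hf : DifferentiableOn ℂ f U)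
    (hf'' : ∀ z ∈ U, ‖deriv (deriv f) z‖ ≤ M) (hx : x ∈ U) (hy : y ∈ U) :
    ‖deriv f y - deriv f x‖ ≤ M * ‖y - x‖ :=
  hUc.norm_image_sub_le_of_norm_deriv_le
    (fun z hz => ((hf.analyticOnNhd hU).deriv z hz).differentiableAt) hf'' hx hy

theorem norm_sub_sub_deriv_mul_le (hU : IsOpen U) (hUc : Convex ℝ U)
    (hf : DifferentiableOn ℂ f U) (hf'' : ∀ z ∈ U, ‖deriv (deriv f) z‖ ≤ M)
    (hx : x ∈ U) (hy : y ∈ U) :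
    ‖f y - f x - deriv f x * (y - x)‖ ≤ M * ‖y - x‖ ^ 2 := by
  set S := U ∩ closedBall x ‖y - x‖
  have hg : ∀ z ∈ S, HasDerivWithinAt (fun w => f w - deriv f x * w)
      (deriv f z - deriv f x) S z := fun z hz => by
    have h := (hf.differentiableAt (hU.mem_nhds hz.1)).hasDerivAt.sub
      ((hasDerivAt_id' z).const_mul (deriv f x))
    rw [mul_one] at h
    exact h.hasDerivWithinAt
  have hbound : ∀ z ∈ S, ‖deriv f z - deriv f x‖ ≤ M * ‖y - x‖ := fun z hz =>
    (norm_deriv_sub_deriv_le hU hUc hf hf'' hx hz.1).trans <|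
      mul_le_mul_of_nonneg_left (mem_closedBall_iff_norm.1 hz.2) ((norm_nonneg _).trans (hf'' x hx))
  calc ‖f y - f x - deriv f x * (y - x)‖
      = ‖(f y - deriv f x * y) - (f x - deriv f x * x)‖ := by ring_nf
    _ ≤ M * ‖y - x‖ * ‖y - x‖ :=
      (hUc.inter (convex_closedBall _ _)).norm_image_sub_le_of_norm_hasDerivWithin_le hg hbound
        ⟨hx, mem_closedBall_self (norm_nonneg _)⟩ ⟨hy, mem_closedBall_iff_norm.2 le_rfl⟩
    _ = M * ‖y - x‖ ^ 2 := by ring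

theorem norm_apply_newton_step_le (hU : IsOpen U) (hUc : Convex ℝ U)
    (hf : DifferentiableOn ℂ f U) (hf'' : ∀ z ∈ U, ‖deriv (deriv f) z‖ ≤ M)
    (hx : x ∈ U) (hstep : x - f x / deriv f x ∈ U) (hx' : deriv f x ≠ 0) :
    ‖f (x - f x / deriv f x)‖ ≤ M * ‖f x / deriv f x‖ ^ 2 := by
  simpa [mul_div_cancel₀ _ hx'] using norm_sub_sub_deriv_mul_le hU hUc hf hf'' hx hstep

theorem exists_zero_mem_closedBall_newton_step (hU : IsOpen U) (hUc : Convex ℝ U)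
    (hf : DifferentiableOn ℂ f U) (hf'' : ∀ z ∈ U, ‖deriv (deriv f) z‖ ≤ M)
    (hx : x ∈ U) (hx' : deriv f x ≠ 0) {d : ℝ} (hd : ‖f x / deriv f x‖ ≤ d)
    (hMd : 4 * M * d ≤ ‖deriv f x‖) (hball : closedBall x (3 / 2 * d) ⊆ U) :
    ∃ z ∈ closedBall (x - f x / deriv f x) (d / 2), f z = 0 := by
  set A := deriv f x
  have hd₀ : 0 ≤ d := (norm_nonneg _).trans hd
  have hM : 0 ≤ M := (norm_nonneg _).trans (hf'' x hx)
  have hS : closedBall (x - f x / A) (d / 2) ⊆ closedBall x (3 / 2 * d) :=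
    closedBall_subset_closedBall' (by rw [dist_eq_norm, sub_sub_cancel_left, norm_neg]; linarith)
  have hfstep : ‖f (x - f x / A)‖ ≤ M * d ^ 2 :=
    (norm_apply_newton_step_le hU hUc hf hf'' hx
      (hball (hS (mem_closedBall_self (by positivity)))) hx').trans (by gcongr)
  refine exists_zero_mem_closedBall_of_norm_deriv_sub_le (q := 3 / 8) hx' (by norm_num)
    (fun y hy => hf.differentiableAt (hU.mem_nhds (hball (hS hy)))) (fun y hy => ?_)
    (by push_cast; nlinarith)
  have hy' := mem_closedBall_iff_norm.1 (hS hy)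
  calc ‖deriv f y - A‖ ≤ M * ‖y - x‖ :=
        norm_deriv_sub_deriv_le hU hUc hf hf'' hx (hball (hS hy))
    _ ≤ 3 / 8 * ‖A‖ := by nlinarith

end Holomorphic

/-- Quantitative Newton's method: let `f` be holomorphic on the disc of radius `2r`
around `s₀` with `|f(s₀)| ≤ δ`, `|f'| ≥ m > 0` and `|f''| ≤ M` on that disc.
If `δ ≤ m²/(4M)` and `δ/m ≤ r`, then `f` has a zero `s*` with `|s* - s₀| ≤ 2δ/m`. -/
theorem stmt_13 (f : ℂ → ℂ) (s₀ : ℂ) (r δ m M : ℝ)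
    (hr : 0 < r) (hm : 0 < m) (hM : 0 < M)
    (hf : DifferentiableOn ℂ f (Metric.ball s₀ (2 * r)))
    (h0 : ‖f s₀‖ ≤ δ)
    (hd : ∀ s ∈ Metric.ball s₀ (2 * r), m ≤ ‖deriv f s‖)
    (hdd : ∀ s ∈ Metric.ball s₀ (2 * r), ‖deriv (deriv f) s‖ ≤ M)
    (h1 : δ ≤ m ^ 2 / (4 * M)) (h2 : δ / m ≤ r) :
    ∃ s : ℂ, ‖s - s₀‖ ≤ 2 * δ / m ∧ f s = 0 := by
  set d := δ / m
  have hd₀ : 0 ≤ d := div_nonneg ((norm_nonneg _).trans h0) hm.le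
  have hMd : M * d ≤ m / 4 := by
    rw [le_div_iff₀ (by positivity)] at h1
    rw [mul_div_assoc', div_le_div_iff₀ hm four_pos]
    nlinarith
  have hs₀ : s₀ ∈ ball s₀ (2 * r) := mem_ball_self (by positivity)
  have hA : m ≤ ‖deriv f s₀‖ := hd s₀ hs₀
  have hstep : ‖f s₀ / deriv f s₀‖ ≤ d := by
    rw [norm_div]
    exact div_le_div₀ ((norm_nonneg _).trans h0) h0 hm hA
  obtain ⟨z, hz, hfz⟩ := exists_zero_mem_closedBall_newton_step isOpen_ball (convex_ball _ _) hf
    hdd hs₀ (norm_pos_iff.1 (hm.trans_le hA)) hstep (by linarith)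
    (closedBall_subset_ball (by linarith))
  refine ⟨z, ?_, hfz⟩
  have hz' := mem_closedBall_iff_norm.1 hz
  have htri := norm_sub_le_norm_sub_add_norm_sub z (s₀ - f s₀ / deriv f s₀) s₀
  rw [sub_sub_cancel_left, norm_neg] at htri
  rw [mul_div_assoc]
  linarith
end

section
/- Let α be an irrational real number and let ℓ₁(m) = 2αm + 1/2, ℓ₂(m) = (3/2)αm - 1/8, ℓ₃(m) = αm - 3/4, ℓ₄(m) = (1/2)αm - 11/8. Then there are infinitely many positive integers m with ‖ℓ_j(m)‖ < 1/4 for all 1 ≤ j ≤ 4, where ‖·‖ denotes distance to the nearest integer. -/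
/-- Distance from a real number to the nearest integer. -/
noncomputable def distNearestInt (x : ℝ) : ℝ := |x - round x|

lemma distNearestInt_le (x : ℝ) (z : ℤ) : distNearestInt x ≤ |x - z| :=
  round_le x z

lemma distNearestInt_pos_of_irrational {x : ℝ} (hx : Irrational x) :
    0 < distNearestInt x := by
  rw [distNearestInt, abs_pos, sub_ne_zero]
  exact hx.ne_int _

/-- Key approximation lemma: the orbit of `β·m` hits near `3/8` mod 1. -/
lemma near_three_eighths {β : ℝ} (hβ : Irrational β) {ε : ℝ} (hε : 0 < ε)
    (hε' : ε ≤ 3/8) : ∃ m : ℕ, 0 < m ∧ distNearestInt (β * m - 3/8) < ε := by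
  obtain ⟨n, hn⟩ := exists_nat_one_div_lt hε
  obtain ⟨k, hk0, _, hk⟩ := Real.exists_nat_abs_mul_sub_round_le β (Nat.succ_pos n)
  set γ : ℝ := (k : ℝ) * β - round ((k : ℝ) * β) with hγdef
  have hkβ : Irrational ((k : ℝ) * β) := hβ.natCast_mul hk0.ne'
  have hγ0 : γ ≠ 0 := sub_ne_zero.mpr (hkβ.ne_int _)
  have hγε : |γ| < ε := by
    push_cast at hk
    refine lt_of_le_of_lt hk (lt_of_le_of_lt ?_ hn)
    apply div_le_div_of_nonneg_left one_pos.le (by positivity) (by linarith)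
  -- choose target constant depending on sign of γ
  set c : ℝ := if 0 < γ then 3/8 else -(5/8) with hcdef
  have hcγ : 1 ≤ c / γ := by
    rcases lt_or_gt_of_ne hγ0 with hneg | hpos
    · have hc : c = -(5/8) := by simp [hcdef, not_lt.mpr hneg.le]
      rw [hc, le_div_iff_of_neg hneg, one_mul]
      have : |γ| = -γ := abs_of_neg hneg
      linarith [hγε]
    · have hc : c = 3/8 := by simp [hcdef, hpos]
      rw [hc, le_div_iff₀ hpos, one_mul]
      have : |γ| = γ := abs_of_pos hpos
      linarith [hγε]
  set j : ℕ := ⌈c / γ⌉₊ with hjdef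
  have hj1 : 1 ≤ j := Nat.one_le_ceil_iff.mpr (by linarith)
  have hjle : c / γ ≤ j := Nat.le_ceil _
  have hjlt : (j : ℝ) < c / γ + 1 := Nat.ceil_lt_add_one (by linarith)
  have hbound : |(j : ℝ) * γ - c| < |γ| := by
    rcases lt_or_gt_of_ne hγ0 with hneg | hpos
    · have h1 : (j : ℝ) * γ ≤ c := by
        have := mul_le_mul_of_nonpos_right hjle hneg.le
        rwa [div_mul_cancel₀ _ hγ0] at this
      have h2 : c + γ < (j : ℝ) * γ := by
        have := mul_lt_mul_of_neg_right hjlt hneg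
        rwa [add_mul, div_mul_cancel₀ _ hγ0, one_mul] at this
      rw [abs_of_neg hneg, abs_of_nonpos (by linarith)]
      linarith
    · have h1 : c ≤ (j : ℝ) * γ := by
        have := mul_le_mul_of_nonneg_right hjle hpos.le
        rwa [div_mul_cancel₀ _ hγ0] at this
      have h2 : (j : ℝ) * γ < c + γ := by
        have := mul_lt_mul_of_pos_right hjlt hpos
        rwa [add_mul, div_mul_cancel₀ _ hγ0, one_mul] at this
      rw [abs_of_pos hpos, abs_of_nonneg (by linarith)]
      linarith
  refine ⟨j * k, Nat.mul_pos hj1 hk0, ?_⟩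
  -- the integer we subtract
  have hc38 : ∃ z0 : ℤ, c - 3/8 = z0 := by
    rcases lt_or_gt_of_ne hγ0 with hneg | hpos
    · exact ⟨-1, by simp [hcdef, not_lt.mpr hneg.le]; norm_num⟩
    · exact ⟨0, by simp [hcdef, hpos]⟩
  obtain ⟨z0, hz0⟩ := hc38
  set z : ℤ := (j : ℤ) * round ((k : ℝ) * β) + z0 with hzdef
  have key : β * (↑(j * k)) - 3/8 - (z : ℝ) = (j : ℝ) * γ - c := by
    rw [hzdef, hγdef]
    push_cast
    have : (c : ℝ) = 3/8 + z0 := by linarith [hz0]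
    rw [this]; ring
  calc distNearestInt (β * ↑(j * k) - 3/8)
      ≤ |β * ↑(j * k) - 3/8 - (z : ℝ)| := distNearestInt_le _ _
    _ = |(j : ℝ) * γ - c| := by rw [key]
    _ < |γ| := hbound
    _ < ε := hγε

lemma irr_shift {α : ℝ} (hα : Irrational α) {m : ℕ} (hm : 0 < m) :
    Irrational ((α / 2) * m - 3/8) := by
  have h1 : Irrational ((m : ℝ) * (α / 2)) :=
    (hα.div_natCast (by norm_num : (2:ℕ) ≠ 0)).natCast_mul hm.ne'
  rw [mul_comm] at h1
  have h2 := h1.sub_ratCast (3/8)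
  simpa using h2

/-- For irrational `α`, there are infinitely many positive integers `m` such that
simultaneously `‖2αm + 1/2‖ < 1/4`, `‖(3/2)αm - 1/8‖ < 1/4`, `‖αm - 3/4‖ < 1/4`,
and `‖(1/2)αm - 11/8‖ < 1/4`, where `‖·‖` is the distance to the nearest integer. -/
theorem stmt_15 (α : ℝ) (hα : Irrational α) :
    {m : ℕ | 0 < m ∧
      distNearestInt (2 * α * m + 1/2) < 1/4 ∧
      distNearestInt ((3/2) * α * m - 1/8) < 1/4 ∧
      distNearestInt (α * m - 3/4) < 1/4 ∧
      distNearestInt ((1/2) * α * m - 11/8) < 1/4}.Infinite := by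
  set β : ℝ := α / 2 with hβdef
  have hβ : Irrational β := by
    have := hα.div_natCast (by norm_num : (2:ℕ) ≠ 0)
    simpa [hβdef] using this
  -- the auxiliary set
  set T : Set ℕ := {m : ℕ | 0 < m ∧ distNearestInt (β * m - 3/8) < 1/16} with hTdef
  have hTinf : T.Infinite := by
    rw [Set.infinite_coe_iff.symm]
    by_contra hfin
    rw [not_infinite_iff_finite] at hfin
    have hTfin : T.Finite := Set.toFinite T
    set F := hTfin.toFinset with hF
    by_cases hne : F.Nonempty
    · set ε := F.inf' hne (fun m => distNearestInt (β * m - 3/8)) with hεdef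
      have hεpos : 0 < ε := by
        rw [hεdef, Finset.lt_inf'_iff]
        intro m hmF
        have hmT : m ∈ T := hTfin.mem_toFinset.mp hmF
        exact distNearestInt_pos_of_irrational (irr_shift hα hmT.1)
      obtain ⟨m, hm0, hmlt⟩ := near_three_eighths hβ
        (lt_min hεpos (by norm_num : (0:ℝ) < 1/16)) (min_le_of_right_le (by norm_num))
      have hmT : m ∈ T := ⟨hm0, lt_of_lt_of_le hmlt (min_le_right _ _)⟩
      have : ε ≤ distNearestInt (β * m - 3/8) :=
        Finset.inf'_le _ (hTfin.mem_toFinset.mpr hmT)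
      have : distNearestInt (β * m - 3/8) < ε :=
        lt_of_lt_of_le hmlt (min_le_left _ _)
      linarith
    · obtain ⟨m, hm0, hmlt⟩ := near_three_eighths hβ
        (by norm_num : (0:ℝ) < 1/16) (by norm_num)
      exact hne ⟨m, hTfin.mem_toFinset.mpr ⟨hm0, hmlt⟩⟩
  refine hTinf.mono ?_
  intro m hm
  obtain ⟨hm0, hmd⟩ := hm
  set t : ℝ := β * m - 3/8 with htdef
  set r : ℤ := round t with hrdef
  set e : ℝ := t - r with hedef
  have he : |e| < 1/16 := hmd
  have hαm : α * m = 2 * t + 3/4 := by rw [htdef, hβdef]; ring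
  refine ⟨hm0, ?_, ?_, ?_, ?_⟩
  · calc distNearestInt (2 * α * m + 1/2) ≤ |2 * α * m + 1/2 - ((4 * r + 2 : ℤ) : ℝ)| :=
        distNearestInt_le _ _
      _ = |4 * e| := by
        congr 1
        rw [hedef, htdef, hβdef]
        push_cast
        ring
      _ < 1/4 := by rw [abs_mul]; rw [abs_of_pos (by norm_num : (0:ℝ) < 4)]; linarith
  · calc distNearestInt ((3/2) * α * m - 1/8) ≤ |(3/2) * α * m - 1/8 - ((3 * r + 1 : ℤ) : ℝ)| :=
        distNearestInt_le _ _
      _ = |3 * e| := by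
        congr 1
        rw [hedef, htdef, hβdef]
        push_cast
        ring
      _ < 1/4 := by rw [abs_mul]; rw [abs_of_pos (by norm_num : (0:ℝ) < 3)]; linarith
  · calc distNearestInt (α * m - 3/4) ≤ |α * m - 3/4 - ((2 * r : ℤ) : ℝ)| :=
        distNearestInt_le _ _
      _ = |2 * e| := by
        congr 1
        rw [hedef, htdef, hβdef]
        push_cast
        ring
      _ < 1/4 := by rw [abs_mul]; rw [abs_of_pos (by norm_num : (0:ℝ) < 2)]; linarith
  · calc distNearestInt ((1/2) * α * m - 11/8) ≤ |(1/2) * α * m - 11/8 - ((r - 1 : ℤ) : ℝ)| :=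
        distNearestInt_le _ _
      _ = |e| := by
        congr 1
        rw [hedef, htdef, hβdef]
        push_cast
        ring
      _ < 1/4 := by linarith
end
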